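/- arXiv:2505.18712 — 4 statements merged into one kernel-verified Lean document; each statement's English description precedes it below -/
import Mathlib

section
/- There is an absolute constant C such that for every s ∈ ℂ with Im(s) ≤ 0 and every real x with 0 < x ≤ 4π, the series defining J_{2is}(x) converges absolutely and |J_{2is}(x)| ≤ C · x^{−2 Im(s)} · e^{π|Re(s)| − 2 Im(s)} · |1/2 + 2is|^{2 Im(s)}. -/
/-!
Each term of the series is at most `(x/2)^(Re ν) ((x/2)²)^m / (m! |Γ(ν+1)|)`, because
`|Γ(ν+1+m)| ≥ |Γ(ν+1)|` when `Re ν ≥ 0`; summing, `|J_ν(x)| ≤ (x/2)^(Re ν) e^((x/2)²) / |Γ(ν+1)|`.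

The Gamma factor is bounded below with Euler's limit formula: for `z = p + iτ`,
`|Γ(z)| / Γ(p) = lim ∏_{j ≤ n} (1 + τ²/(p+j)²)^(-1/2)`. Comparing the sum of logarithms with
`∫_p^∞ log (1 + τ²/u²) du`, whose primitive is `u log (1 + τ²/u²) + 2τ arctan (u/τ)`, gives
`|Γ(z)| ≥ Γ(p) (|z|/p)^(p-1) e^(-π|τ|/2)`. With the elementary `Γ(p) ≥ (p/e)^(p-1)/2` this becomes
`|Γ(ν+1)| ≥ (|ν+1|/e)^(Re ν) e^(-π|Im ν|/2) / 2`, and `|1/2 + ν| ≤ |1 + ν|` concludes.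
-/

open Real Complex

/-- The Bessel function of the first kind `J_ν(x)`, for `x > 0`, defined via its power series,
where `(x/2)^w := exp (w * log (x/2))` with the real logarithm. -/
noncomputable def besselJ (ν : ℂ) (x : ℝ) : ℂ :=
  ∑' m : ℕ, ((-1) ^ m / ((Nat.factorial m : ℂ) * Complex.Gamma (m + ν + 1))) *
    Complex.exp ((2 * m + ν) * Real.log (x / 2))

theorem Real.log_one_add_sq_le_two_mul_mul_arctan {a : ℝ} (ha : 0 ≤ a) :
    Real.log (1 + a ^ 2) ≤ 2 * a * Real.arctan a := by
  let g : ℝ → ℝ := fun x => 2 * x * Real.arctan x - Real.log (1 + x ^ 2)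
  have hg : ∀ x, HasDerivAt g (2 * Real.arctan x) x := fun x => by
    have h := ((hasDerivAt_id x).const_mul 2).mul (Real.hasDerivAt_arctan x) |>.sub
      (((hasDerivAt_pow 2 x).const_add 1).log (by positivity))
    refine h.congr_deriv ?_
    simp only [id]
    field_simp
    ring
  have hmono : MonotoneOn g (Set.Ici 0) :=
    monotoneOn_of_deriv_nonneg (convex_Ici 0) (fun x _ => (hg x).continuousAt.continuousWithinAt)
      (fun x _ => (hg x).differentiableAt.differentiableWithinAt) fun x hx => by
        rw [(hg x).deriv]
        have : 0 ≤ Real.arctan x := Real.arctan_nonneg.mpr (interior_subset hx)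
        linarith
  simpa [g] using hmono Set.self_mem_Ici ha ha

noncomputable def primitiveLogOneAddSqDivSq (τ u : ℝ) : ℝ :=
  u * Real.log (1 + τ ^ 2 / u ^ 2) + 2 * τ * Real.arctan (u / τ)

theorem hasDerivAt_primitiveLogOneAddSqDivSq {τ u : ℝ} (hτ : τ ≠ 0) (hu : u ≠ 0) :
    HasDerivAt (primitiveLogOneAddSqDivSq τ) (Real.log (1 + τ ^ 2 / u ^ 2)) u := by
  have hlog := ((((hasDerivAt_pow 2 u).inv (by positivity)).const_mul (τ ^ 2)).const_add 1).log
    (by positivity : (1 : ℝ) + τ ^ 2 * (u ^ 2)⁻¹ ≠ 0)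
  have h := ((hasDerivAt_id u).mul hlog).add
    (((Real.hasDerivAt_arctan (u / τ)).comp u ((hasDerivAt_id u).div_const τ)).const_mul (2 * τ))
  refine h.congr_deriv ?_
  simp only [id, Pi.inv_apply, ← div_eq_mul_inv]
  field_simp
  ring

theorem primitiveLogOneAddSqDivSq_le_pi_mul {τ u : ℝ} (hτ : 0 < τ) (hu : 0 < u) :
    primitiveLogOneAddSqDivSq τ u ≤ π * τ := by
  have hlog := Real.log_one_add_sq_le_two_mul_mul_arctan (a := τ / u) (by positivity)
  have harctan : Real.arctan (τ / u) = π / 2 - Real.arctan (u / τ) := by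
    rw [← inv_div, Real.arctan_inv_of_pos (by positivity)]
  rw [div_pow, harctan] at hlog
  have := mul_le_mul_of_nonneg_left hlog hu.le
  rw [show u * (2 * (τ / u) * (π / 2 - Real.arctan (u / τ))) =
    π * τ - 2 * τ * Real.arctan (u / τ) by field_simp] at this
  unfold primitiveLogOneAddSqDivSq
  linarith

theorem sum_range_log_one_add_sq_div_sq_le (τ : ℝ) {p : ℝ} (hp : 0 < p) (n : ℕ) :
    ∑ j ∈ Finset.range (n + 1), Real.log (1 + τ ^ 2 / (p + j) ^ 2) ≤
      π * |τ| - (p - 1) * Real.log (1 + τ ^ 2 / p ^ 2) := by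
  rcases eq_or_ne τ 0 with rfl | hτ
  · simp
  rw [← sq_abs τ]
  set t := |τ|
  have ht : 0 < t := abs_pos.mpr hτ
  set f : ℝ → ℝ := fun u => Real.log (1 + t ^ 2 / u ^ 2)
  have hanti : AntitoneOn f (Set.Ici p) := fun a ha b hb hab => by
    have ha' : 0 < a := hp.trans_le ha
    apply Real.log_le_log (by positivity)
    gcongr
  have hderiv : ∀ u ∈ Set.uIcc p (p + n), HasDerivAt (primitiveLogOneAddSqDivSq t) (f u) u :=
    fun u hu => hasDerivAt_primitiveLogOneAddSqDivSq ht.ne' <| by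
      rw [Set.uIcc_of_le (by simp)] at hu
      exact (hp.trans_le hu.1).ne'
  have htail : ∑ j ∈ Finset.range n, f (p + ↑(j + 1)) ≤
      primitiveLogOneAddSqDivSq t (p + n) - primitiveLogOneAddSqDivSq t p := by
    rw [← intervalIntegral.integral_eq_sub_of_hasDerivAt hderiv
      (hanti.mono (by simp [Set.uIcc_of_le, Set.Icc_subset_Ici_self])).intervalIntegrable]
    exact (hanti.mono Set.Icc_subset_Ici_self).sum_le_integral
  have hhead : p * f p ≤ primitiveLogOneAddSqDivSq t p := by
    have : 0 ≤ Real.arctan (p / t) := by positivity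
    unfold primitiveLogOneAddSqDivSq
    nlinarith
  have hend := primitiveLogOneAddSqDivSq_le_pi_mul ht (by positivity : 0 < p + n)
  rw [Finset.sum_range_succ']
  simp only [f] at htail hhead
  push_cast at htail ⊢
  rw [add_zero]
  linarith

theorem Complex.two_mul_log_norm_div_re {w : ℂ} (hw : 0 < w.re) :
    2 * Real.log (‖w‖ / w.re) = Real.log (1 + w.im ^ 2 / w.re ^ 2) := by
  have hsq : (‖w‖ / w.re) ^ 2 = 1 + w.im ^ 2 / w.re ^ 2 := by
    rw [div_pow, Complex.sq_norm, Complex.normSq_apply]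
    field_simp
  rw [← hsq, Real.log_pow]
  norm_num

theorem Complex.sum_range_log_norm_add_div_le {z : ℂ} (hz : 0 < z.re) (n : ℕ) :
    ∑ j ∈ Finset.range (n + 1), Real.log (‖z + j‖ / (z.re + j)) ≤
      π * |z.im| / 2 - (z.re - 1) * Real.log (‖z‖ / z.re) := by
  have hterm : ∀ j : ℕ, Real.log (‖z + j‖ / (z.re + j)) =
      Real.log (1 + z.im ^ 2 / (z.re + j) ^ 2) / 2 := fun j => by
    have := two_mul_log_norm_div_re (w := z + j) (by rw [add_re, natCast_re]; positivity)
    simp only [add_re, natCast_re, add_im, natCast_im, add_zero] at this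
    linarith
  simp_rw [hterm, ← Finset.sum_div]
  have := sum_range_log_one_add_sq_div_sq_le z.im hz n
  rw [← two_mul_log_norm_div_re hz] at this
  linarith

theorem Complex.GammaSeq_re_mul_rpow_mul_exp_le_norm_GammaSeq {z : ℂ} (hz : 0 < z.re) (n : ℕ) :
    Real.GammaSeq z.re n * (‖z‖ / z.re) ^ (z.re - 1) * Real.exp (-(π * |z.im| / 2)) ≤
      ‖Complex.GammaSeq z n‖ := by
  rcases Nat.eq_zero_or_pos n with rfl | hn
  · simp [Real.GammaSeq, Complex.GammaSeq, hz.ne', Complex.ne_zero_of_re_pos hz]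
  have hfactor : ∀ j : ℕ, 0 < ‖z + j‖ / (z.re + j) := fun j => div_pos
    (norm_pos_iff.mpr (ne_zero_of_re_pos (by rw [add_re, natCast_re]; positivity)))
    (by positivity)
  let P := ∏ j ∈ Finset.range (n + 1), ‖z + j‖ / (z.re + j)
  have hP : 0 < P := Finset.prod_pos fun j _ => hfactor j
  have hnorm : ‖Complex.GammaSeq z n‖ = Real.GammaSeq z.re n / P := by
    rw [Complex.GammaSeq, Real.GammaSeq, norm_div, norm_mul, norm_natCast_cpow_of_pos hn,
      norm_prod, Complex.norm_natCast]
    simp only [P, Finset.prod_div_distrib]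
    rw [div_div_div_cancel_right₀ (Finset.prod_pos fun j _ => by positivity).ne']
  have hPle : P ≤ Real.exp (π * |z.im| / 2 - (z.re - 1) * Real.log (‖z‖ / z.re)) := by
    rw [← Real.exp_log hP, Real.log_prod fun j _ => (hfactor j).ne']
    exact Real.exp_le_exp.mpr (sum_range_log_norm_add_div_le hz n)
  have hzpos : 0 < ‖z‖ / z.re := div_pos (norm_pos_iff.mpr (ne_zero_of_re_pos hz)) hz
  rw [hnorm, le_div_iff₀ hP]
  calc Real.GammaSeq z.re n * (‖z‖ / z.re) ^ (z.re - 1) * Real.exp (-(π * |z.im| / 2)) * P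
      ≤ Real.GammaSeq z.re n * (‖z‖ / z.re) ^ (z.re - 1) * Real.exp (-(π * |z.im| / 2)) *
          Real.exp (π * |z.im| / 2 - (z.re - 1) * Real.log (‖z‖ / z.re)) := by
        gcongr
        unfold Real.GammaSeq
        positivity
    _ = Real.GammaSeq z.re n := by
        rw [Real.rpow_def_of_pos hzpos, mul_assoc, mul_assoc, ← Real.exp_add, ← Real.exp_add,
          show Real.log (‖z‖ / z.re) * (z.re - 1) + (-(π * |z.im| / 2) +
            (π * |z.im| / 2 - (z.re - 1) * Real.log (‖z‖ / z.re))) = 0 by ring,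
          Real.exp_zero, mul_one]

theorem Complex.Gamma_re_mul_rpow_mul_exp_le_norm_Gamma {z : ℂ} (hz : 0 < z.re) :
    Real.Gamma z.re * (‖z‖ / z.re) ^ (z.re - 1) * Real.exp (-(π * |z.im| / 2)) ≤
      ‖Complex.Gamma z‖ :=
  le_of_tendsto_of_tendsto'
    (((Real.GammaSeq_tendsto_Gamma z.re).mul_const _).mul_const _)
    (Complex.GammaSeq_tendsto_Gamma z).norm
    (GammaSeq_re_mul_rpow_mul_exp_le_norm_GammaSeq hz)

theorem Real.add_one_div_exp_one_rpow_le {q : ℝ} (hq : 0 < q) :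
    ((q + 1) / Real.exp 1) ^ q ≤ q * (q / Real.exp 1) ^ (q - 1) := by
  have hlog : q * (Real.log (q + 1) - Real.log q) ≤ 1 := by
    rw [← Real.log_div (by positivity) hq.ne']
    calc q * Real.log ((q + 1) / q) ≤ q * ((q + 1) / q - 1) := by
          gcongr
          exact Real.log_le_sub_one_of_pos (by positivity)
      _ = 1 := by field_simp; ring
  rw [Real.rpow_def_of_pos (by positivity), Real.rpow_def_of_pos (by positivity),
    Real.log_div (by positivity) (by positivity), Real.log_div hq.ne' (by positivity),
    Real.log_exp]
  calc Real.exp ((Real.log (q + 1) - 1) * q)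
      ≤ Real.exp (Real.log q + (Real.log q - 1) * (q - 1)) := Real.exp_le_exp.mpr (by nlinarith)
    _ = q * Real.exp ((Real.log q - 1) * (q - 1)) := by rw [Real.exp_add, Real.exp_log hq]

theorem Real.rpow_div_exp_one_div_two_le_Gamma {p : ℝ} (hp : 1 ≤ p) :
    (p / Real.exp 1) ^ (p - 1) / 2 ≤ Real.Gamma p := by
  have base : ∀ p : ℝ, 1 ≤ p → p ≤ 2 → (p / Real.exp 1) ^ (p - 1) / 2 ≤ Real.Gamma p := by
    intro p hp1 hp2
    have hle_one : (p / Real.exp 1) ^ (p - 1) ≤ 1 :=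
      Real.rpow_le_one (by positivity)
        ((div_le_one (by positivity)).mpr (by linarith [Real.exp_one_gt_d9])) (by linarith)
    have hΓ : Real.Gamma 2 ≤ Real.Gamma (p + 1) :=
      Real.Gamma_strictMonoOn_Ici.monotoneOn (by norm_num) (Set.mem_Ici.mpr (by linarith))
        (by linarith)
    rw [Real.Gamma_two, Real.Gamma_add_one (by positivity)] at hΓ
    nlinarith
  obtain ⟨n, hn⟩ : ∃ n : ℕ, p ≤ n + 2 := ⟨⌈p⌉₊, by linarith [Nat.le_ceil p]⟩
  induction n generalizing p with
  | zero => exact base p hp (by simpa using hn)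
  | succ n ih =>
    rcases le_or_gt p 2 with hp2 | hp2
    · exact base p hp hp2
    obtain ⟨q, rfl⟩ : ∃ q, p = q + 1 := ⟨p - 1, by ring⟩
    have hq : 0 < q := by linarith
    rw [Real.Gamma_add_one hq.ne', add_sub_cancel_right]
    have := ih (p := q) (by linarith) (by push_cast at hn; linarith)
    calc ((q + 1) / Real.exp 1) ^ q / 2 ≤ q * (q / Real.exp 1) ^ (q - 1) / 2 := by
          gcongr
          exact add_one_div_exp_one_rpow_le hq
      _ ≤ q * Real.Gamma q := by nlinarith

theorem Complex.div_exp_one_rpow_mul_exp_div_two_le_norm_Gamma {z : ℂ} (hz : 1 ≤ z.re) :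
    (‖z‖ / Real.exp 1) ^ (z.re - 1) * Real.exp (-(π * |z.im| / 2)) / 2 ≤ ‖Complex.Gamma z‖ := by
  have hre : 0 < z.re := by linarith
  calc (‖z‖ / Real.exp 1) ^ (z.re - 1) * Real.exp (-(π * |z.im| / 2)) / 2
      = (z.re / Real.exp 1) ^ (z.re - 1) / 2 * (‖z‖ / z.re) ^ (z.re - 1) *
          Real.exp (-(π * |z.im| / 2)) := by
        have hsplit : ‖z‖ / Real.exp 1 = z.re / Real.exp 1 * (‖z‖ / z.re) := by field_simp
        rw [hsplit, Real.mul_rpow (by positivity) (by positivity)]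
        ring
    _ ≤ Real.Gamma z.re * (‖z‖ / z.re) ^ (z.re - 1) * Real.exp (-(π * |z.im| / 2)) := by
        gcongr
        exact Real.rpow_div_exp_one_div_two_le_Gamma hz
    _ ≤ ‖Complex.Gamma z‖ := Gamma_re_mul_rpow_mul_exp_le_norm_Gamma hre

theorem Complex.norm_Gamma_le_norm_Gamma_add_nat {w : ℂ} (hw : 1 ≤ w.re) (m : ℕ) :
    ‖Complex.Gamma w‖ ≤ ‖Complex.Gamma (w + m)‖ := by
  induction m with
  | zero => simp
  | succ m ih =>
    have hre : 1 ≤ (w + m).re := by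
      rw [add_re, natCast_re]
      linarith [Nat.cast_nonneg (α := ℝ) m]
    rw [Nat.cast_succ, ← add_assoc, Complex.Gamma_add_one _ (ne_zero_of_re_pos (by linarith)),
      norm_mul]
    exact ih.trans (le_mul_of_one_le_left (norm_nonneg _) (hre.trans (re_le_norm _)))

noncomputable def besselJTerm (ν : ℂ) (x : ℝ) (m : ℕ) : ℂ :=
  ((-1) ^ m / ((Nat.factorial m : ℂ) * Complex.Gamma (m + ν + 1))) *
    Complex.exp ((2 * m + ν) * Real.log (x / 2))

theorem norm_besselJTerm_le {ν : ℂ} (hν : 0 ≤ ν.re) {x : ℝ} (hx : 0 < x) (m : ℕ) :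
    ‖besselJTerm ν x m‖ ≤ (x / 2) ^ ν.re / ‖Complex.Gamma (ν + 1)‖ *
      (((x / 2) ^ 2) ^ m / m.factorial) := by
  have hΓ : 0 < ‖Complex.Gamma (ν + 1)‖ :=
    norm_pos_iff.mpr (Complex.Gamma_ne_zero_of_re_pos (by rw [add_re, one_re]; positivity))
  have hexp : ‖Complex.exp ((2 * m + ν) * Real.log (x / 2))‖ =
      (x / 2) ^ ν.re * ((x / 2) ^ 2) ^ m := by
    have hre : ((2 * m + ν) * (Real.log (x / 2) : ℂ)).re =
        (ν.re + (2 * m : ℕ)) * Real.log (x / 2) := by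
      rw [re_mul_ofReal, add_re, add_comm]
      norm_cast
    rw [Complex.norm_exp, hre, ← pow_mul, ← Real.rpow_natCast, ← Real.rpow_add (by positivity),
      Real.rpow_def_of_pos (by positivity), mul_comm]
  have hden : (m.factorial : ℝ) * ‖Complex.Gamma (ν + 1)‖ ≤
      m.factorial * ‖Complex.Gamma (m + ν + 1)‖ := by
    gcongr
    rw [show (m : ℂ) + ν + 1 = ν + 1 + m by ring]
    exact Complex.norm_Gamma_le_norm_Gamma_add_nat (by rw [add_re, one_re]; linarith) m
  rw [besselJTerm, norm_mul, norm_div, norm_mul, hexp]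
  simp only [norm_pow, norm_neg, norm_one, one_pow, Complex.norm_natCast]
  calc 1 / (m.factorial * ‖Complex.Gamma (m + ν + 1)‖) * ((x / 2) ^ ν.re * ((x / 2) ^ 2) ^ m)
      = (x / 2) ^ ν.re * ((x / 2) ^ 2) ^ m / (m.factorial * ‖Complex.Gamma (m + ν + 1)‖) := by
        ring
    _ ≤ (x / 2) ^ ν.re * ((x / 2) ^ 2) ^ m / (m.factorial * ‖Complex.Gamma (ν + 1)‖) :=
        div_le_div_of_nonneg_left (by positivity) (by positivity) hden
    _ = _ := by field_simp

theorem summable_norm_besselJTerm {ν : ℂ} (hν : 0 ≤ ν.re) {x : ℝ} (hx : 0 < x) :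
    Summable fun m => ‖besselJTerm ν x m‖ :=
  .of_nonneg_of_le (fun _ => norm_nonneg _) (norm_besselJTerm_le hν hx)
    ((Real.summable_pow_div_factorial _).mul_left _)

theorem norm_besselJ_le_rpow_div_norm_Gamma_mul_exp {ν : ℂ} (hν : 0 ≤ ν.re) {x : ℝ}
    (hx : 0 < x) :
    ‖besselJ ν x‖ ≤ (x / 2) ^ ν.re / ‖Complex.Gamma (ν + 1)‖ * Real.exp ((x / 2) ^ 2) := by
  have hsum := summable_norm_besselJTerm hν hx
  calc ‖besselJ ν x‖ ≤ ∑' m, ‖besselJTerm ν x m‖ := norm_tsum_le_tsum_norm hsum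
    _ ≤ ∑' m : ℕ, (x / 2) ^ ν.re / ‖Complex.Gamma (ν + 1)‖ * (((x / 2) ^ 2) ^ m / m.factorial) :=
        hsum.tsum_le_tsum (norm_besselJTerm_le hν hx)
          ((Real.summable_pow_div_factorial _).mul_left _)
    _ = _ := by rw [tsum_mul_left, Real.exp_eq_exp_ℝ, NormedSpace.exp_eq_tsum_div]

theorem norm_besselJ_le_of_re_nonneg {ν : ℂ} (hν : 0 ≤ ν.re) {x : ℝ} (hx : 0 < x) :
    ‖besselJ ν x‖ ≤ 2 * Real.exp ((x / 2) ^ 2) * (x * Real.exp 1 / (2 * ‖ν + 1‖)) ^ ν.re *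
      Real.exp (π * |ν.im| / 2) := by
  have hΓ := Complex.div_exp_one_rpow_mul_exp_div_two_le_norm_Gamma (z := ν + 1) (by simp [hν])
  simp only [add_re, one_re, add_sub_cancel_right, add_im, one_im, add_zero] at hΓ
  have hR : 0 < ‖ν + 1‖ :=
    norm_pos_iff.mpr (Complex.ne_zero_of_re_pos (by rw [add_re, one_re]; positivity))
  have hsplit : (x * Real.exp 1 / (2 * ‖ν + 1‖)) ^ ν.re =
      (x / 2) ^ ν.re / (‖ν + 1‖ / Real.exp 1) ^ ν.re := by
    rw [← Real.div_rpow (by positivity) (by positivity)]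
    field_simp
  calc ‖besselJ ν x‖ ≤ (x / 2) ^ ν.re / ‖Complex.Gamma (ν + 1)‖ * Real.exp ((x / 2) ^ 2) :=
        norm_besselJ_le_rpow_div_norm_Gamma_mul_exp hν hx
    _ ≤ (x / 2) ^ ν.re / ((‖ν + 1‖ / Real.exp 1) ^ ν.re * Real.exp (-(π * |ν.im| / 2)) / 2) *
          Real.exp ((x / 2) ^ 2) := by
        gcongr
    _ = _ := by
        rw [hsplit, Real.exp_neg]
        field_simp

theorem Complex.norm_one_half_add_le_norm_add_one {ν : ℂ} (hν : 0 ≤ ν.re) :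
    ‖(1 / 2 : ℂ) + ν‖ ≤ ‖ν + 1‖ := by
  rw [← sq_le_sq₀ (norm_nonneg _) (norm_nonneg _), Complex.sq_norm, Complex.sq_norm,
    Complex.normSq_apply, Complex.normSq_apply]
  simp only [add_re, add_im, one_re, one_im, div_ofNat_re, div_ofNat_im]
  nlinarith

/-- For `Im s ≤ 0` and `0 < x ≤ 4π`, the series defining `J_{2is}(x)` converges absolutely and
`|J_{2is}(x)| ≤ C x^{-2 Im s} e^{π |Re s| - 2 Im s} |1/2 + 2is|^{2 Im s}`. -/
theorem besselJ_bound_lower_half_plane :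
    ∃ C : ℝ, ∀ s : ℂ, s.im ≤ 0 → ∀ x : ℝ, 0 < x → x ≤ 4 * π →
      Summable (fun m : ℕ =>
        ‖((-1) ^ m / ((Nat.factorial m : ℂ) * Complex.Gamma (m + 2 * Complex.I * s + 1))) *
          Complex.exp ((2 * m + 2 * Complex.I * s) * Real.log (x / 2))‖) ∧
      ‖besselJ (2 * Complex.I * s) x‖ ≤
        C * x ^ (-2 * s.im) * Real.exp (π * |s.re| - 2 * s.im) *
          ‖(1 / 2 : ℂ) + 2 * Complex.I * s‖ ^ (2 * s.im) := by
  refine ⟨2 * Real.exp (4 * π ^ 2), fun s hs x hx hx4 => ?_⟩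
  have hre : (2 * Complex.I * s).re = -2 * s.im := by simp
  have him : |(2 * Complex.I * s).im| = 2 * |s.re| := by simp [abs_mul]
  have hν : 0 ≤ (2 * Complex.I * s).re := by rw [hre]; linarith
  refine ⟨summable_norm_besselJTerm hν hx, ?_⟩
  have hWR := Complex.norm_one_half_add_le_norm_add_one hν
  have hW : 0 < ‖(1 / 2 : ℂ) + 2 * Complex.I * s‖ :=
    norm_pos_iff.mpr (Complex.ne_zero_of_re_pos (by
      rw [add_re, hre, div_ofNat_re, one_re]
      linarith))
  calc ‖besselJ (2 * Complex.I * s) x‖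
      ≤ 2 * Real.exp ((x / 2) ^ 2) * (x * Real.exp 1 / (2 * ‖2 * Complex.I * s + 1‖)) ^
          (-2 * s.im) * Real.exp (π * (2 * |s.re|) / 2) := by
        simpa only [hre, him] using norm_besselJ_le_of_re_nonneg hν hx
    _ ≤ 2 * Real.exp (4 * π ^ 2) * (x * Real.exp 1 / ‖(1 / 2 : ℂ) + 2 * Complex.I * s‖) ^
          (-2 * s.im) * Real.exp (π * |s.re|) := by
        gcongr
        · nlinarith [Real.pi_pos]
        · linarith
        · linarith
        · rw [mul_div_assoc, mul_div_cancel_left₀ _ two_ne_zero]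
    _ = _ := by
        rw [Real.div_rpow (by positivity) hW.le, Real.mul_rpow hx.le (by positivity),
          Real.exp_one_rpow, show 2 * s.im = -(-2 * s.im) by ring, Real.rpow_neg hW.le,
          sub_eq_add_neg, neg_neg, Real.exp_add]
        ring
end

section
/- Let d be a positive integer, let X ≥ 1 be real, and let a : ℕ → ℂ. Then Σ*_{χ mod d} |Σ_{1 ≤ n ≤ X} χ(n) a(n)|² ≤ (d + X) · Σ_{1 ≤ n ≤ X} |a(n)|². -/
/-!
Enlarging the sum to all characters modulo `d` and grouping `n` by its residue `r`, the
character sum becomes `∑ r, χ r * b r` with `b r = ∑_{n ≡ r} a n`. Orthogonality of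
characters turns `∑ χ, ‖∑ r, χ r * b r‖ ^ 2` into `φ d * ∑_{r unit} ‖b r‖ ^ 2`. Each `b r`
has at most `⌊X⌋ / d + 1` terms, so Cauchy–Schwarz bounds the whole by
`φ d * (⌊X⌋ / d + 1) * ∑ ‖a n‖ ^ 2`, and `φ d * (⌊X⌋ / d + 1) ≤ ⌊X⌋ + d`.
-/

open MeasureTheory Real Complex

/-- The sum of `f` over all primitive Dirichlet characters modulo `d`
(a finite sum, since there are finitely many Dirichlet characters modulo `d`). -/
noncomputable def sumPrimitive (d : ℕ) (f : DirichletCharacter ℂ d → ℝ) : ℝ :=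
  ∑ᶠ χ ∈ {χ : DirichletCharacter ℂ d | χ.IsPrimitive}, f χ

open Finset ComplexConjugate

theorem Nat.card_filter_natCast_eq_le_div_add_one {d N : ℕ} {s : Finset ℕ} (hs : ∀ m ∈ s, m ≤ N)
    (r : ZMod d) : #{m ∈ s | ((m : ℕ) : ZMod d) = r} ≤ N / d + 1 := by
  rw [← card_range (N / d + 1)]
  refine card_le_card_of_injOn (· / d) (fun m hm ↦ ?_) fun m₁ hm₁ m₂ hm₂ hdiv ↦ ?_
  · simp only [coe_filter, Set.mem_ofPred_eq] at hm
    simpa [Nat.lt_succ_iff] using Nat.div_le_div_right (hs m hm.1)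
  · simp only [coe_filter, Set.mem_ofPred_eq] at hm₁ hm₂
    exact Nat.ext_div_modEq hdiv <| (ZMod.natCast_eq_natCast_iff _ _ _).1 (hm₁.2.trans hm₂.2.symm)

theorem Nat.totient_mul_div_add_one_le (d N : ℕ) : d.totient * (N / d + 1) ≤ N + d := by
  calc d.totient * (N / d + 1) ≤ d * (N / d) + d := by
        rw [mul_add_one]; gcongr <;> exact Nat.totient_le d
    _ ≤ N + d := by gcongr; exact Nat.mul_div_le N d

theorem sumPrimitive_le_sum {d : ℕ} [NeZero d] {f : DirichletCharacter ℂ d → ℝ} (hf : 0 ≤ f) :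
    sumPrimitive d f ≤ ∑ χ, f χ := by
  rw [sumPrimitive, finsum_mem_eq_finite_toFinset_sum _ (Set.toFinite _)]
  exact sum_le_sum_of_subset_of_nonneg (subset_univ _) fun χ _ _ ↦ hf χ

theorem norm_sum_sq_le_card_mul_sum_norm_sq {ι E : Type*} [SeminormedAddCommGroup E]
    (s : Finset ι) (f : ι → E) : ‖∑ i ∈ s, f i‖ ^ 2 ≤ #s * ∑ i ∈ s, ‖f i‖ ^ 2 :=
  (pow_le_pow_left₀ (norm_nonneg _) (norm_sum_le s f) 2).trans sq_sum_le_card_mul_sum_sq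

namespace DirichletCharacter

variable {d : ℕ} [NeZero d]

theorem sum_char_mul_conj_char_eq (x y : ZMod d) :
    ∑ χ : DirichletCharacter ℂ d, χ x * conj (χ y) =
      if IsUnit y ∧ y = x then (d.totient : ℂ) else 0 := by
  by_cases hy : IsUnit y
  · have hstar (χ : DirichletCharacter ℂ d) : χ x * conj (χ y) = χ y⁻¹ * χ x := by
      have h1 : χ y * χ y⁻¹ = 1 := by rw [← map_mul, ZMod.mul_inv_of_unit _ hy, map_one]
      rw [← Complex.star_def, MulChar.star_apply', MulChar.inv_apply_eq_inv',
        inv_eq_of_mul_eq_one_right h1, mul_comm]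
    simp_rw [hstar, sum_char_inv_mul_char_eq ℂ hy x, hy, true_and]
  · simp [MulChar.map_nonunit _ hy, hy]

theorem sum_norm_sq_sum_char_mul (b : ZMod d → ℂ) :
    ∑ χ : DirichletCharacter ℂ d, ‖∑ r, χ r * b r‖ ^ 2 =
      d.totient * ∑ r with IsUnit r, ‖b r‖ ^ 2 := by
  apply Complex.ofReal_injective
  push_cast
  simp_rw [← Complex.mul_conj', map_sum, map_mul, sum_mul_sum]
  rw [sum_comm]
  simp_rw [sum_comm (s := univ (α := DirichletCharacter ℂ d))]
  have hregroup (χ : DirichletCharacter ℂ d) (r s : ZMod d) :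
      χ r * b r * (conj (χ s) * conj (b s)) = χ r * conj (χ s) * (b r * conj (b s)) := by ring
  simp_rw [hregroup, ← sum_mul, sum_char_mul_conj_char_eq, ite_mul, zero_mul,
    and_comm (a := IsUnit _), ite_and, sum_ite_eq', mem_univ, if_true, sum_filter, mul_sum, mul_ite, mul_zero]

theorem sum_norm_sq_sum_char_mul_le (s : Finset ℕ) (a : ℕ → ℂ) {c : ℕ}
    (hc : ∀ r : ZMod d, #{n ∈ s | ((n : ℕ) : ZMod d) = r} ≤ c) :
    ∑ χ : DirichletCharacter ℂ d, ‖∑ n ∈ s, χ n * a n‖ ^ 2 ≤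
      d.totient * c * ∑ n ∈ s, ‖a n‖ ^ 2 := by
  set b : ZMod d → ℂ := fun r ↦ ∑ n ∈ s with ((n : ℕ) : ZMod d) = r, a n
  have hfiber (χ : DirichletCharacter ℂ d) : ∑ n ∈ s, χ n * a n = ∑ r, χ r * b r := by
    rw [← sum_fiberwise s (fun n : ℕ ↦ (n : ZMod d))]
    refine sum_congr rfl fun r _ ↦ ?_
    rw [mul_sum]
    exact sum_congr rfl fun n hn ↦ by rw [(mem_filter.1 hn).2]
  calc ∑ χ : DirichletCharacter ℂ d, ‖∑ n ∈ s, χ n * a n‖ ^ 2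
        = d.totient * ∑ r with IsUnit r, ‖b r‖ ^ 2 := by
          simp_rw [hfiber]; exact sum_norm_sq_sum_char_mul b
    _ ≤ d.totient * ∑ r, ‖b r‖ ^ 2 := by
          gcongr; exact filter_subset _ _
    _ ≤ d.totient * ∑ r, c * ∑ n ∈ s with ((n : ℕ) : ZMod d) = r, ‖a n‖ ^ 2 := by
          gcongr with r
          exact (norm_sum_sq_le_card_mul_sum_norm_sq _ _).trans (by gcongr; exact hc r)
    _ = d.totient * c * ∑ n ∈ s, ‖a n‖ ^ 2 := by rw [← mul_sum, sum_fiberwise, mul_assoc]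

end DirichletCharacter

/-- Large sieve type bound: `Σ*_{χ mod d} |Σ_{n ≤ X} χ(n) a(n)|² ≤ (d + X) Σ_{n ≤ X} |a(n)|²`. -/
theorem large_sieve_primitive (d : ℕ) (hd : 0 < d) (X : ℝ) (hX : 1 ≤ X) (a : ℕ → ℂ) :
    sumPrimitive d (fun χ => ‖∑ n ∈ Finset.Icc 1 ⌊X⌋₊, χ (n : ZMod d) * a n‖ ^ 2)
      ≤ (d + X) * ∑ n ∈ Finset.Icc 1 ⌊X⌋₊, ‖a n‖ ^ 2 := by
  have : NeZero d := ⟨hd.ne'⟩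
  set N := ⌊X⌋₊
  have hcount (r : ZMod d) : #{n ∈ Icc 1 N | ((n : ℕ) : ZMod d) = r} ≤ N / d + 1 :=
    Nat.card_filter_natCast_eq_le_div_add_one (fun n hn ↦ (mem_Icc.1 hn).2) r
  have hconst : (d.totient : ℝ) * (N / d + 1 : ℕ) ≤ d + X :=
    calc (d.totient : ℝ) * (N / d + 1 : ℕ) ≤ (N + d : ℕ) := by
          exact_mod_cast Nat.totient_mul_div_add_one_le d N
      _ ≤ d + X := by push_cast; linarith [Nat.floor_le (zero_le_one.trans hX)]
  calc sumPrimitive d (fun χ => ‖∑ n ∈ Icc 1 N, χ (n : ZMod d) * a n‖ ^ 2)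
      ≤ ∑ χ : DirichletCharacter ℂ d, ‖∑ n ∈ Icc 1 N, χ (n : ZMod d) * a n‖ ^ 2 :=
        sumPrimitive_le_sum fun χ ↦ by positivity
    _ ≤ d.totient * (N / d + 1 : ℕ) * ∑ n ∈ Icc 1 N, ‖a n‖ ^ 2 :=
        DirichletCharacter.sum_norm_sq_sum_char_mul_le _ a hcount
    _ ≤ (d + X) * ∑ n ∈ Icc 1 N, ‖a n‖ ^ 2 := by gcongr
end

section
/- Let ε > 0 be fixed. There exists N₀ = N₀(ε) such that for every real N ≥ N₀ and all reals N_1, …, N_40 ≥ 1/2 with N_1 ⋯ N_40 ≤ N^{15/8−ε}, at least one of the following holds: (a) there exists a set I ⊆ {1,…,40} such that N^{3/4+ε/100} < Π_{j∈I} N_j ≤ N^{9/8−ε/100}; (b) there exist two distinct indices j₁, j₂ ∈ {1,…,40} such that Π_{j∈{1,…,40}∖{j₁,j₂}} N_j ≤ N^{9/8−ε/100}. -/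
/-!
Put `α = 3/4 + ε/100`, `β = 9/8 - ε/100` and `γ = β - α = 3/8 - ε/50`. If two factors exceed `N^γ`,
removing them leaves at most `N^(15/8 - ε - 2γ) ≤ N^β`; if one factor exceeds `N^β`, removing it
and any other (which is at least `1/2`) leaves at most `2 N^(15/8 - ε - β) ≤ N^β`. Otherwise at
most one factor exceeds `N^γ` and none exceeds `N^β`. If then the total product exceeds `N^α`, take
a minimal sub-product exceeding `N^α`: either it contains a factor at most `N^γ`, and is then at
most `N^(α + γ) = N^β`, or it is the single factor above `N^γ`. If the total product is at most
`N^α`, removing any two factors leaves at most `4 min(N^α, N^(15/8 - ε)) ≤ N^β`.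
-/

open Real Finset

theorem Finset.exists_subset_lt_prod_minimal {ι M : Type*} [DecidableEq ι] [CommMonoid M]
    [LinearOrder M] {x : ι → M} {s : Finset ι} {A : M} (hA : A < ∏ j ∈ s, x j) :
    ∃ T ⊆ s, A < ∏ j ∈ T, x j ∧ ∀ j ∈ T, ∏ i ∈ T.erase j, x i ≤ A := by
  obtain ⟨T, hTs, hT⟩ :=
    exists_minimal_le_of_wellFoundedLT (fun T : Finset ι ↦ A < ∏ j ∈ T, x j) s hA
  exact ⟨T, hTs, hT.prop, fun j hj ↦ not_lt.1 (hT.not_prop_of_lt (erase_ssubset hj))⟩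

section OrderedSemiring

variable {ι R : Type*} [DecidableEq ι] [CommSemiring R] [LinearOrder R] [IsStrictOrderedRing R]
  {x : ι → R} {s : Finset ι}

theorem Finset.exists_subset_prod_mem_Ioc {A c : R} (hx : ∀ j ∈ s, 0 ≤ x j) (hA : 1 ≤ A)
    (hs : A < ∏ j ∈ s, x j) (hle : ∀ j ∈ s, x j ≤ A * c)
    (hlarge : ∀ i ∈ s, ∀ j ∈ s, c < x i → c < x j → i = j) :
    ∃ T ⊆ s, A < ∏ j ∈ T, x j ∧ ∏ j ∈ T, x j ≤ A * c := by
  obtain ⟨T, hTs, hAT, hTmin⟩ := exists_subset_lt_prod_minimal hs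
  refine ⟨T, hTs, hAT, ?_⟩
  by_cases hsmall : ∃ j ∈ T, x j ≤ c
  · obtain ⟨j, hjT, hjc⟩ := hsmall
    calc ∏ i ∈ T, x i = x j * ∏ i ∈ T.erase j, x i := (mul_prod_erase T x hjT).symm
      _ ≤ c * A := mul_le_mul hjc (hTmin j hjT)
          (prod_nonneg fun i hi ↦ hx i (hTs (mem_of_mem_erase hi))) ((hx j (hTs hjT)).trans hjc)
      _ = A * c := mul_comm c A
  · push Not at hsmall
    obtain ⟨j, hjT⟩ : T.Nonempty := by
      refine nonempty_iff_ne_empty.2 fun hT ↦ ?_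
      rw [hT, prod_empty] at hAT
      exact hAT.not_ge hA
    have hTj : T = {j} := eq_singleton_iff_unique_mem.2
      ⟨hjT, fun i hiT ↦ hlarge i (hTs hiT) j (hTs hjT) (hsmall i hiT) (hsmall j hjT)⟩
    rw [hTj, prod_singleton]
    exact hle j (hTs hjT)

theorem Finset.prod_erase_erase_le_of_le_mul {i j : ι} {a b : R} (hx : ∀ k ∈ s, 0 ≤ x k)
    (hi : i ∈ s) (hj : j ∈ s) (hij : i ≠ j) (ha : 0 < a) (hxij : a ≤ x i * x j)
    (hs : ∏ k ∈ s, x k ≤ a * b) : ∏ k ∈ (s.erase i).erase j, x k ≤ b := by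
  have hrest : 0 ≤ ∏ k ∈ (s.erase i).erase j, x k :=
    prod_nonneg fun k hk ↦ hx k (mem_of_mem_erase (mem_of_mem_erase hk))
  refine le_of_mul_le_mul_left ?_ ha
  calc a * ∏ k ∈ (s.erase i).erase j, x k
      ≤ x i * x j * ∏ k ∈ (s.erase i).erase j, x k := mul_le_mul_of_nonneg_right hxij hrest
    _ = ∏ k ∈ s, x k := by
      rw [mul_assoc, mul_prod_erase _ x (mem_erase.2 ⟨hij.symm, hj⟩), mul_prod_erase s x hi]
    _ ≤ a * b := hs

end OrderedSemiring

theorem four_le_rpow {N e : ℝ} (hN : 256 ≤ N) (he : 1 / 4 ≤ e) : 4 ≤ N ^ e := by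
  have h4 : (4 : ℝ) ≤ N ^ (4 : ℝ)⁻¹ :=
    (le_rpow_inv_iff_of_pos (by norm_num) (by linarith) (by norm_num)).2 (by norm_num; linarith)
  exact h4.trans (rpow_le_rpow_of_exponent_le (by linarith) (by linarith))

theorem four_mul_le_rpow {N ε P : ℝ} (hN : 256 ≤ N) (hPα : P ≤ N ^ (3 / 4 + ε / 100 : ℝ))
    (hP : P ≤ N ^ (15 / 8 - ε : ℝ)) : 4 * P ≤ N ^ (9 / 8 - ε / 100 : ℝ) := by
  have hN0 : 0 < N := by linarith
  rcases le_or_gt ε 2 with hε | hε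
  · calc 4 * P ≤ 4 * N ^ (3 / 4 + ε / 100 : ℝ) := by linarith
      _ ≤ N ^ (3 / 8 - ε / 50 : ℝ) * N ^ (3 / 4 + ε / 100 : ℝ) :=
        mul_le_mul_of_nonneg_right (four_le_rpow hN (by linarith)) (by positivity)
      _ = N ^ (9 / 8 - ε / 100 : ℝ) := by rw [← rpow_add hN0]; ring_nf
  · calc 4 * P ≤ 4 * N ^ (15 / 8 - ε : ℝ) := by linarith
      _ ≤ N ^ (1 / 4 : ℝ) * N ^ (15 / 8 - ε : ℝ) :=
        mul_le_mul_of_nonneg_right (four_le_rpow hN le_rfl) (by positivity)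
      _ = N ^ (17 / 8 - ε : ℝ) := by rw [← rpow_add hN0]; ring_nf
      _ ≤ N ^ (9 / 8 - ε / 100 : ℝ) := rpow_le_rpow_of_exponent_le (by linarith) (by linarith)

theorem exists_balanced_subprod_or_prod_erase_erase_le {ι : Type*} [Fintype ι] [DecidableEq ι]
    [Nontrivial ι] {N ε : ℝ} (hε : 0 < ε) (hN : 256 ≤ N) (x : ι → ℝ) (hx : ∀ j, 1 / 2 ≤ x j)
    (htot : ∏ j, x j ≤ N ^ (15 / 8 - ε : ℝ)) :
    (∃ I : Finset ι, N ^ (3 / 4 + ε / 100 : ℝ) < ∏ j ∈ I, x j ∧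
        ∏ j ∈ I, x j ≤ N ^ (9 / 8 - ε / 100 : ℝ)) ∨
      ∃ i j, i ≠ j ∧ ∏ k ∈ (univ.erase i).erase j, x k ≤ N ^ (9 / 8 - ε / 100 : ℝ) := by
  have hN0 : 0 < N := by linarith
  have hx0 : ∀ j ∈ univ, 0 ≤ x j := fun j _ ↦ le_trans (by norm_num) (hx j)
  set α : ℝ := 3 / 4 + ε / 100 with hα
  set β : ℝ := 9 / 8 - ε / 100 with hβdef
  set γ : ℝ := 3 / 8 - ε / 50 with hγ
  have hβ : N ^ β = N ^ α * N ^ γ := by rw [← rpow_add hN0, hα, hβdef, hγ]; ring_nf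
  by_cases htwo : ∃ i j, i ≠ j ∧ N ^ γ < x i ∧ N ^ γ < x j
  · obtain ⟨i, j, hij, hi, hj⟩ := htwo
    refine .inr ⟨i, j, hij, prod_erase_erase_le_of_le_mul hx0 (mem_univ i) (mem_univ j) hij
      (by positivity) (mul_le_mul hi.le hj.le (by positivity) (hx0 i (mem_univ i))) ?_⟩
    calc ∏ k, x k ≤ N ^ (15 / 8 - ε : ℝ) := htot
      _ ≤ N ^ (γ + γ + β) := rpow_le_rpow_of_exponent_le (by linarith) (by linarith [hβdef, hγ])
      _ = N ^ γ * N ^ γ * N ^ β := by rw [rpow_add hN0, rpow_add hN0]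
  push Not at htwo
  by_cases hhuge : ∃ i, N ^ β < x i
  · obtain ⟨i, hi⟩ := hhuge
    obtain ⟨j, hji⟩ := exists_ne i
    refine .inr ⟨i, j, hji.symm, prod_erase_erase_le_of_le_mul (a := N ^ β / 2) hx0 (mem_univ i)
      (mem_univ j) hji.symm (by positivity) ?_ ?_⟩
    · calc N ^ β / 2 = N ^ β * (1 / 2) := by ring
        _ ≤ x i * x j := mul_le_mul hi.le (hx j) (by norm_num) (hx0 i (mem_univ i))
    · have h4 : 4 ≤ N ^ (β + β - (15 / 8 - ε)) := four_le_rpow hN (by linarith [hβdef])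
      have hsplit : N ^ β * N ^ β = N ^ (15 / 8 - ε : ℝ) * N ^ (β + β - (15 / 8 - ε)) := by
        rw [← rpow_add hN0, ← rpow_add hN0]; ring_nf
      have hpos : 0 < N ^ (15 / 8 - ε : ℝ) := by positivity
      nlinarith
  push Not at hhuge
  by_cases hbig : N ^ α < ∏ j, x j
  · obtain ⟨T, -, hT⟩ := exists_subset_prod_mem_Ioc hx0
      (one_le_rpow (by linarith) (by positivity)) hbig (fun j _ ↦ hβ ▸ hhuge j)
      fun i _ j _ hi hj ↦ by_contra fun hij ↦ (htwo i j hij hi).not_gt hj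
    exact .inl ⟨T, hT.1, hβ ▸ hT.2⟩
  · obtain ⟨i, j, hij⟩ := exists_pair_ne ι
    refine .inr ⟨i, j, hij, prod_erase_erase_le_of_le_mul (a := 1 / 4) hx0 (mem_univ i)
      (mem_univ j) hij (by norm_num) ?_ ?_⟩
    · calc (1 / 4 : ℝ) = 1 / 2 * (1 / 2) := by norm_num
        _ ≤ x i * x j := mul_le_mul (hx i) (hx j) (by norm_num) (hx0 i (mem_univ i))
    · have := four_mul_le_rpow hN (not_lt.1 hbig) htot
      linarith

/-- Splitting lemma for the dyadic ranges: if `N₁ ⋯ N₄₀ ≤ N^{15/8-ε}`, then either there is a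
balanced sub-product `I` with `N^{3/4+ε/100} < Π_{j∈I} N_j ≤ N^{9/8-ε/100}`, or all but two of the
factors have product at most `N^{9/8-ε/100}`. -/
theorem splitting_lemma (ε : ℝ) (hε : 0 < ε) :
    ∃ N₀ : ℝ, ∀ N : ℝ, N₀ ≤ N → ∀ Nf : Fin 40 → ℝ, (∀ j, 1 / 2 ≤ Nf j) →
      (∏ j, Nf j) ≤ N ^ (15 / 8 - ε : ℝ) →
      (∃ I : Finset (Fin 40),
          N ^ (3 / 4 + ε / 100 : ℝ) < ∏ j ∈ I, Nf j ∧
          (∏ j ∈ I, Nf j) ≤ N ^ (9 / 8 - ε / 100 : ℝ)) ∨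
      (∃ j₁ j₂ : Fin 40, j₁ ≠ j₂ ∧
          (∏ j ∈ (univ.erase j₁).erase j₂, Nf j) ≤ N ^ (9 / 8 - ε / 100 : ℝ)) :=
  ⟨256, fun _ hN Nf hNf htot ↦ exists_balanced_subprod_or_prod_erase_erase_le hε hN Nf hNf htot⟩
end

section
/- Let ε > 0 be fixed, let k ≥ 2 be an even integer, and set Θ_k := 2 − 1/(5k−2). There exists N₀ = N₀(ε,k) such that for every real N ≥ N₀ and all reals N_1, …, N_40 ≥ 1/2 with N_1 ⋯ N_40 ≤ N^{Θ_k−ε}, at least one of the following holds: (a) there exists a set I ⊆ {1,…,40} such that N^{kΘ_k−2k+1+ε/100} < Π_{j∈I} N_j ≤ N^{Θ_k}/N^{kΘ_k−2k+1+ε/100}; (b) there exist two distinct indices j₁, j₂ ∈ {1,…,40} such that Π_{j∈{1,…,40}∖{j₁,j₂}} N_j ≤ N^{kΘ_k−2k+1+ε/100}. -/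
/-!
Let `A = N^α` with `α = kΘ - 2k + 1 + ε/100`, and suppose no sub-product lies in `(A, N^Θ/A]`.
Grow a maximal set `S` of factors `N_j ≥ 1` with product at most `A`. Adding any further factor
`N_j ≥ 1` pushes the product past `A`, hence past `B = N^Θ/A`; so each such `N_j` exceeds `B/A`.
Three of them outside `S` would give a sub-product of the factors `≥ 1` exceeding
`B³/A² = N^{3Θ-5α} = N^{Θ-ε/20}`, whereas, as the factors below `1` are at least `1/2`, that
sub-product is at most `2⁴⁰ N^{Θ-ε}`; this is impossible once `N^{19ε/20} ≥ 2⁴⁰`.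
Hence at most two factors `N_j ≥ 1` lie outside `S`, and removing them leaves a product `≤ A`.
-/

open Real Finset

namespace Finset

lemma exists_ne_subset_pair_of_card_le_two {α : Type*} [DecidableEq α] [Nontrivial α]
    {s : Finset α} (hs : #s ≤ 2) : ∃ a b, a ≠ b ∧ s ⊆ {a, b} := by
  by_cases hs1 : #s ≤ 1
  · obtain ⟨a, ha⟩ := card_le_one_iff_subset_singleton.1 hs1
    obtain ⟨b, hb⟩ := exists_ne a
    exact ⟨a, b, hb.symm, ha.trans (by simp)⟩
  · obtain ⟨a, b, hab, rfl⟩ := card_eq_two.1 (by omega : #s = 2)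
    exact ⟨a, b, hab, subset_rfl⟩

lemma prod_filter_one_le_le_two_pow_mul_prod {ι : Type*} [Fintype ι] {f : ι → ℝ}
    (hf : ∀ j, 1 / 2 ≤ f j) :
    ∏ j ∈ univ.filter (1 ≤ f ·), f j ≤ 2 ^ Fintype.card ι * ∏ j, f j := by
  rw [prod_filter, ← card_univ, ← prod_const, ← prod_mul_distrib]
  refine prod_le_prod (fun j _ ↦ by split_ifs <;> linarith [hf j]) fun j _ ↦ ?_
  split_ifs <;> linarith [hf j]

lemma prod_le_prod_of_filter_one_le_subset {ι : Type*} {f : ι → ℝ} (hf : ∀ j, 0 ≤ f j)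
    {S T : Finset ι} (hTS : T.filter (1 ≤ f ·) ⊆ S) (hS : ∀ j ∈ S, 1 ≤ f j) :
    ∏ j ∈ T, f j ≤ ∏ j ∈ S, f j :=
  calc ∏ j ∈ T, f j ≤ ∏ j ∈ T.filter (1 ≤ f ·), f j :=
        prod_le_prod_of_subset_of_le_one (filter_subset _ _) (fun j _ ↦ hf j)
          fun _ hjT hj ↦ (not_le.1 fun h ↦ hj (mem_filter.2 ⟨hjT, h⟩)).le
    _ ≤ ∏ j ∈ S, f j :=
        prod_le_prod_of_subset_of_one_le hTS (fun j _ ↦ hf j) fun j hj _ ↦ hS j hj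

variable {ι : Type*} [DecidableEq ι]

lemma exists_maximal_subset_prod_le (f : ι → ℝ) (P : Finset ι) {A : ℝ} (hA : 1 ≤ A) :
    ∃ S ⊆ P, ∏ j ∈ S, f j ≤ A ∧ ∀ x ∈ P \ S, A < ∏ j ∈ insert x S, f j := by
  obtain ⟨S, -, hS⟩ := (P.powerset.filter fun T ↦ ∏ j ∈ T, f j ≤ A).exists_le_maximal
    (a := ∅) (by simpa using hA)
  simp only [mem_filter, mem_powerset] at hS
  refine ⟨S, hS.1.1, hS.1.2, fun x hx ↦ ?_⟩
  obtain ⟨hxP, hxS⟩ := mem_sdiff.1 hx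
  by_contra! hle
  exact hxS (hS.2 ⟨insert_subset hxP hS.1.1, hle⟩ (subset_insert x S) (mem_insert_self x S))

lemma pow_three_div_sq_lt_prod_of_two_lt_card_sdiff {f : ι → ℝ} {A B : ℝ} {S P : Finset ι}
    (hf : ∀ j, 0 < f j) (hP : ∀ j ∈ P, 1 ≤ f j) (hSP : S ⊆ P) (hSA : ∏ j ∈ S, f j ≤ A)
    (hB : ∀ w ∈ P \ S, B < ∏ j ∈ insert w S, f j) (hcard : 2 < #(P \ S)) :
    B ^ 3 / A ^ 2 < ∏ j ∈ P, f j := by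
  obtain ⟨x, y, z, hx, hy, hz, hxy, hxz, hyz⟩ := two_lt_card_iff.1 hcard
  have hA : 0 < A := (prod_pos fun j _ ↦ hf j).trans_le hSA
  have hBS : ∀ w ∈ P \ S, B < f w * ∏ j ∈ S, f j := fun w hw ↦ by
    simpa [prod_insert (mem_sdiff.1 hw).2] using hB w hw
  have hBA : ∀ w ∈ P \ S, B / A < f w := fun w hw ↦ by
    rw [div_lt_iff₀ hA]
    exact (hBS w hw).trans_le (mul_le_mul_of_nonneg_left hSA (hf w).le)
  set U := insert x (insert y (insert z S))
  have hUP : U ⊆ P := by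
    simp only [U, insert_subset_iff]
    exact ⟨(mem_sdiff.1 hx).1, (mem_sdiff.1 hy).1, (mem_sdiff.1 hz).1, hSP⟩
  have hU : ∏ j ∈ U, f j = (f x * ∏ j ∈ S, f j) * f y * f z := by
    rw [prod_insert (by simp [hxy, hxz, (mem_sdiff.1 hx).2]),
      prod_insert (by simp [hyz, (mem_sdiff.1 hy).2]), prod_insert (mem_sdiff.1 hz).2]
    ring
  have hUpos : 0 < ∏ j ∈ U, f j := prod_pos fun j _ ↦ hf j
  calc B ^ 3 / A ^ 2 < ∏ j ∈ U, f j := by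
        rcases le_or_gt B 0 with hB0 | hB0
        · exact lt_of_le_of_lt (div_nonpos_of_nonpos_of_nonneg (by nlinarith [sq_nonneg B])
            (sq_nonneg A)) hUpos
        · have hBA0 : 0 ≤ B / A := by positivity
          calc B ^ 3 / A ^ 2 = B * (B / A) * (B / A) := by field_simp
            _ < (f x * ∏ j ∈ S, f j) * f y * f z :=
              mul_lt_mul'' (mul_lt_mul'' (hBS x hx) (hBA y hy) hB0.le hBA0) (hBA z hz)
                (by positivity) hBA0
            _ = ∏ j ∈ U, f j := hU.symm
    _ ≤ ∏ j ∈ P, f j :=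
        prod_le_prod_of_subset_of_one_le hUP (fun j _ ↦ (hf j).le) fun j hj _ ↦ hP j hj

theorem exists_prod_erase_erase_le_or_lt_prod_filter [Fintype ι] [Nontrivial ι] {f : ι → ℝ}
    {A B : ℝ} (hf : ∀ j, 0 < f j) (hA : 1 ≤ A)
    (hgap : ∀ I : Finset ι, A < ∏ j ∈ I, f j → B < ∏ j ∈ I, f j) :
    (∃ j₁ j₂, j₁ ≠ j₂ ∧ ∏ j ∈ (univ.erase j₁).erase j₂, f j ≤ A) ∨
      B ^ 3 / A ^ 2 < ∏ j ∈ univ.filter (1 ≤ f ·), f j := by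
  set P := univ.filter (1 ≤ f ·)
  have hP : ∀ j ∈ P, 1 ≤ f j := fun j hj ↦ (mem_filter.1 hj).2
  obtain ⟨S, hSP, hSA, hSmax⟩ := exists_maximal_subset_prod_le f P hA
  by_cases hcard : #(P \ S) ≤ 2
  · obtain ⟨j₁, j₂, hne, hsub⟩ := exists_ne_subset_pair_of_card_le_two hcard
    have hTS : ((univ.erase j₁).erase j₂).filter (1 ≤ f ·) ⊆ S := by
      intro j hj
      simp only [mem_filter, mem_erase] at hj
      by_contra hjS
      have := hsub (mem_sdiff.2 ⟨mem_filter.2 ⟨mem_univ j, hj.2⟩, hjS⟩)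
      simp only [mem_insert, mem_singleton] at this
      tauto
    exact .inl ⟨j₁, j₂, hne, (prod_le_prod_of_filter_one_le_subset (fun j ↦ (hf j).le) hTS
      fun j hj ↦ hP j (hSP hj)).trans hSA⟩
  · exact .inr (pow_three_div_sq_lt_prod_of_two_lt_card_sdiff hf hP hSP hSA
      (fun w hw ↦ hgap _ (hSmax w hw)) (not_le.1 hcard))

end Finset

/-- This identity is what singles out `Θ = 2 - 1/(5k-2)`: it makes `3Θ - 5α = Θ - ε/20`. -/
lemma five_mul_splitting_exponent {k : ℝ} (hk : 5 * k - 2 ≠ 0) (ε : ℝ) :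
    5 * (k * (2 - 1 / (5 * k - 2)) - 2 * k + 1 + ε / 100) =
      2 * (2 - 1 / (5 * k - 2)) + ε / 20 := by
  field_simp
  ring

theorem splitting_lemma_general_general (ε : ℝ) (hε : 0 < ε) (k : ℕ) (hk2 : 2 ≤ k) :
    ∃ N₀ : ℝ, ∀ N : ℝ, N₀ ≤ N → ∀ Nf : Fin 40 → ℝ, (∀ j, 1 / 2 ≤ Nf j) →
      (∏ j, Nf j) ≤ N ^ ((2 - 1 / (5 * (k : ℝ) - 2)) - ε) →
      (∃ I : Finset (Fin 40),
          N ^ ((k : ℝ) * (2 - 1 / (5 * (k : ℝ) - 2)) - 2 * k + 1 + ε / 100) < ∏ j ∈ I, Nf j ∧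
          (∏ j ∈ I, Nf j) ≤ N ^ (2 - 1 / (5 * (k : ℝ) - 2)) /
            N ^ ((k : ℝ) * (2 - 1 / (5 * (k : ℝ) - 2)) - 2 * k + 1 + ε / 100)) ∨
      (∃ j₁ j₂ : Fin 40, j₁ ≠ j₂ ∧
          (∏ j ∈ (univ.erase j₁).erase j₂, Nf j) ≤
            N ^ ((k : ℝ) * (2 - 1 / (5 * (k : ℝ) - 2)) - 2 * k + 1 + ε / 100)) := by
  refine ⟨(2 ^ 40) ^ (19 / 20 * ε)⁻¹, fun N hN Nf hNf hprod ↦ ?_⟩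
  have hk : (2 : ℝ) ≤ k := by exact_mod_cast hk2
  have hexp := five_mul_splitting_exponent (k := k) (by linarith) ε
  have hΘ : 1 / (5 * (k : ℝ) - 2) ≤ 2 := by
    rw [div_le_iff₀ (by linarith)]
    linarith
  set Θ := 2 - 1 / (5 * (k : ℝ) - 2)
  set α := (k : ℝ) * Θ - 2 * k + 1 + ε / 100
  have hN1 : 1 ≤ N := (one_le_rpow (by norm_num) (by positivity)).trans hN
  have hN0 : 0 < N := by linarith
  have hlarge : 2 ^ 40 ≤ N ^ (19 / 20 * ε) :=
    (rpow_inv_le_iff_of_pos (by norm_num) hN0.le (by positivity)).1 hN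
  rw [or_iff_not_imp_left]
  intro hgap
  push Not at hgap
  refine (Finset.exists_prod_erase_erase_le_or_lt_prod_filter (fun j ↦ by linarith [hNf j])
    (one_le_rpow hN1 (by linarith)) hgap).resolve_right fun hbig ↦ ?_
  have hcube : (N ^ Θ / N ^ α) ^ 3 / (N ^ α) ^ 2 = N ^ (19 / 20 * ε) * N ^ (Θ - ε) := by
    rw [← rpow_sub hN0, ← rpow_mul_natCast hN0.le, ← rpow_mul_natCast hN0.le, ← rpow_sub hN0,
      ← rpow_add hN0]
    congr 1
    push_cast
    linarith
  have hsmall := Finset.prod_filter_one_le_le_two_pow_mul_prod hNf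
  rw [Fintype.card_fin] at hsmall
  refine lt_irrefl (2 ^ 40 * N ^ (Θ - ε)) ?_
  calc 2 ^ 40 * N ^ (Θ - ε) ≤ N ^ (19 / 20 * ε) * N ^ (Θ - ε) := by gcongr
    _ < ∏ j ∈ univ.filter (1 ≤ Nf ·), Nf j := hcube ▸ hbig
    _ ≤ 2 ^ 40 * ∏ j, Nf j := hsmall
    _ ≤ 2 ^ 40 * N ^ (Θ - ε) := by gcongr

/-- Splitting lemma for the dyadic ranges, general weight `k`: with `Θ_k = 2 - 1/(5k-2)`, if
`N₁ ⋯ N₄₀ ≤ N^{Θ_k-ε}` then either there is a sub-product `I` with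
`N^{kΘ_k-2k+1+ε/100} < Π_{j∈I} N_j ≤ N^{Θ_k}/N^{kΘ_k-2k+1+ε/100}`, or all but two of the
factors have product at most `N^{kΘ_k-2k+1+ε/100}`. -/
theorem splitting_lemma_general (ε : ℝ) (hε : 0 < ε) (k : ℕ) (hk2 : 2 ≤ k) (hkeven : Even k) :
    ∃ N₀ : ℝ, ∀ N : ℝ, N₀ ≤ N → ∀ Nf : Fin 40 → ℝ, (∀ j, 1 / 2 ≤ Nf j) →
      (∏ j, Nf j) ≤ N ^ ((2 - 1 / (5 * (k : ℝ) - 2)) - ε) →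
      (∃ I : Finset (Fin 40),
          N ^ ((k : ℝ) * (2 - 1 / (5 * (k : ℝ) - 2)) - 2 * k + 1 + ε / 100) < ∏ j ∈ I, Nf j ∧
          (∏ j ∈ I, Nf j) ≤ N ^ (2 - 1 / (5 * (k : ℝ) - 2)) /
            N ^ ((k : ℝ) * (2 - 1 / (5 * (k : ℝ) - 2)) - 2 * k + 1 + ε / 100)) ∨
      (∃ j₁ j₂ : Fin 40, j₁ ≠ j₂ ∧
          (∏ j ∈ (univ.erase j₁).erase j₂, Nf j) ≤
            N ^ ((k : ℝ) * (2 - 1 / (5 * (k : ℝ) - 2)) - 2 * k + 1 + ε / 100)) :=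
  splitting_lemma_general_general ε hε k hk2
end
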